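/- The iterated kernels satisfy the semigroup-type identity: for all m, n ∈ ℕ and s, t ∈ I with s ≤ t, R_{k,μ,m+n}(t,s) = ∫_{[s,t]} R_{k,μ,m}(t, s̃) R_{k,μ,n}(s̃, s) μ(ds̃). -/

import Mathlib

open MeasureTheory ENNReal Set

/-- The iterated kernels of a nonnegative kernel `k` relative to a measure `μ`:
`R_{k,μ,1} = k` and `R_{k,μ,n+1}(t,s) = ∫_{[s,t]} k(t,u) R_{k,μ,n}(u,s) μ(du)`
(the value at `n = 0` is junk). -/
noncomputable def iterK (μ : Measure ℝ) (k : ℝ → ℝ → ℝ≥0∞) : ℕ → ℝ → ℝ → ℝ≥0∞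
  | 0 => fun _ _ => 0
  | 1 => k
  | (n + 2) => fun t s => ∫⁻ u in Icc s t, k t u * iterK μ k (n + 1) u s ∂μ

/-!
Induction on `m`. Peeling one factor `k(t,u)` off `R_{m+1+n}(t,s)`, applying the induction
hypothesis at `(u,s)` and exchanging the order of integration over the triangle
`s ≤ v ≤ u ≤ t` (Tonelli) collects `∫_{[v,t]} k(t,u) R_m(u,v) μ(du) = R_{m+1}(t,v)`.
-/

open Function

theorem iterK_succ {μ : Measure ℝ} {k : ℝ → ℝ → ℝ≥0∞} {n : ℕ} (hn : 1 ≤ n)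
    (t s : ℝ) :
    iterK μ k (n + 1) t s = ∫⁻ u in Icc s t, k t u * iterK μ k n u s ∂μ := by
  obtain ⟨n, rfl⟩ := Nat.exists_eq_add_of_le' hn
  rfl

section

variable {μ : Measure ℝ} [SFinite μ]

theorem measurable_setLIntegral_Icc {F : ℝ → ℝ → ℝ → ℝ≥0∞}
    (hF : Measurable fun p : (ℝ × ℝ) × ℝ => F p.1.1 p.1.2 p.2) :
    Measurable fun q : ℝ × ℝ => ∫⁻ u in Icc q.2 q.1, F q.1 q.2 u ∂μ := by
  have hS : MeasurableSet {p : (ℝ × ℝ) × ℝ | p.2 ∈ Icc p.1.2 p.1.1} :=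
    (measurableSet_le measurable_fst.snd measurable_snd).inter
      (measurableSet_le measurable_snd measurable_fst.fst)
  simp_rw [← lintegral_indicator measurableSet_Icc, indicator_apply]
  exact (hF.ite hS measurable_const).lintegral_prod_right'

theorem lintegral_Icc_lintegral_Icc_swap {f : ℝ → ℝ → ℝ≥0∞}
    (hf : Measurable (uncurry f)) (s t : ℝ) :
    ∫⁻ u in Icc s t, ∫⁻ v in Icc s u, f u v ∂μ ∂μ
      = ∫⁻ v in Icc s t, ∫⁻ u in Icc v t, f u v ∂μ ∂μ := by
  set T := {p : ℝ × ℝ | s ≤ p.2 ∧ p.2 ≤ p.1 ∧ p.1 ≤ t}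
  have hT : MeasurableSet T :=
    (measurableSet_le measurable_const measurable_snd).inter
      ((measurableSet_le measurable_snd measurable_fst).inter
        (measurableSet_le measurable_fst measurable_const))
  calc ∫⁻ u in Icc s t, ∫⁻ v in Icc s u, f u v ∂μ ∂μ
      = ∫⁻ u, ∫⁻ v, T.indicator (uncurry f) (u, v) ∂μ ∂μ := by
        rw [← lintegral_indicator measurableSet_Icc]
        congr 1 with u
        by_cases hu : u ∈ Icc s t
        · rw [indicator_of_mem hu, ← lintegral_indicator measurableSet_Icc]
          congr 1 with v
          simp only [indicator_apply, T, mem_Icc, mem_ofPred_eq, uncurry_apply_pair]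
          grind
        · have hT_u : ∀ v, (u, v) ∉ T := fun v huv => hu ⟨huv.1.trans huv.2.1, huv.2.2⟩
          simp [hu, hT_u]
    _ = ∫⁻ v, ∫⁻ u, T.indicator (uncurry f) (u, v) ∂μ ∂μ :=
        lintegral_lintegral_swap (hf.indicator hT).aemeasurable
    _ = ∫⁻ v in Icc s t, ∫⁻ u in Icc v t, f u v ∂μ ∂μ := by
        rw [← lintegral_indicator measurableSet_Icc]
        congr 1 with v
        by_cases hv : v ∈ Icc s t
        · rw [indicator_of_mem hv, ← lintegral_indicator measurableSet_Icc]
          congr 1 with u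
          simp only [indicator_apply, T, mem_Icc, mem_ofPred_eq, uncurry_apply_pair]
          grind
        · have hT_v : ∀ u, (u, v) ∉ T := fun u huv => hv ⟨huv.1, huv.2.1.trans huv.2.2⟩
          simp [hv, hT_v]

variable {k : ℝ → ℝ → ℝ≥0∞}

theorem measurable_iterK (hk : Measurable (uncurry k)) :
    ∀ n, Measurable (uncurry (iterK μ k n))
  | 0 => measurable_const
  | 1 => hk
  | n + 2 => measurable_setLIntegral_Icc (F := fun t s u => k t u * iterK μ k (n + 1) u s) <|
      (hk.comp (measurable_fst.fst.prodMk measurable_snd)).mul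
        ((measurable_iterK hk (n + 1)).comp (measurable_snd.prodMk measurable_fst.snd))

theorem iterK_add (hk : Measurable (uncurry k)) {m n : ℕ} (hm : 1 ≤ m)
    (hn : 1 ≤ n) (s t : ℝ) :
    iterK μ k (m + n) t s = ∫⁻ u in Icc s t, iterK μ k m t u * iterK μ k n u s ∂μ := by
  induction m, hm using Nat.le_induction generalizing t with
  | base => rw [add_comm, iterK_succ hn]; rfl
  | succ m hm ih =>
    have hR := measurable_iterK (μ := μ) hk
    calc iterK μ k (m + 1 + n) t s
        = ∫⁻ u in Icc s t, k t u * iterK μ k (m + n) u s ∂μ := by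
          rw [add_right_comm, iterK_succ (by omega)]
      _ = ∫⁻ u in Icc s t, ∫⁻ v in Icc s u,
            k t u * iterK μ k m u v * iterK μ k n v s ∂μ ∂μ := by
          refine setLIntegral_congr_fun measurableSet_Icc fun u _ => ?_
          have hmeas : Measurable fun v => iterK μ k m u v * iterK μ k n v s :=
            (hR m).of_uncurry_left.mul (hR n).of_uncurry_right
          rw [ih, ← lintegral_const_mul _ hmeas]
          simp only [mul_assoc]
      _ = ∫⁻ v in Icc s t, ∫⁻ u in Icc v t,
            k t u * iterK μ k m u v * iterK μ k n v s ∂μ ∂μ :=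
          lintegral_Icc_lintegral_Icc_swap
            (f := fun u v => k t u * iterK μ k m u v * iterK μ k n v s)
            (((hk.of_uncurry_left.comp measurable_fst).mul (hR m)).mul
              ((hR n).of_uncurry_right.comp measurable_snd)) s t
      _ = ∫⁻ v in Icc s t, iterK μ k (m + 1) t v * iterK μ k n v s ∂μ := by
          refine setLIntegral_congr_fun measurableSet_Icc fun v _ => ?_
          have hmeas : Measurable fun u => k t u * iterK μ k m u v :=
            hk.of_uncurry_left.mul (hR m).of_uncurry_right
          rw [iterK_succ hm, ← lintegral_mul_const _ hmeas]

end

theorem stmt12_general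
    (μ : Measure ℝ) [SigmaFinite μ]
    (k : ℝ → ℝ → ℝ≥0∞) (hk : Measurable fun q : ℝ × ℝ => k q.1 q.2)
    (m n : ℕ) (hm : 1 ≤ m) (hn : 1 ≤ n)
    (s t : ℝ) :
    iterK μ k (m + n) t s = ∫⁻ u in Icc s t, iterK μ k m t u * iterK μ k n u s ∂μ :=
  iterK_add hk hm hn s t

/-- Semigroup-type identity of the iterated kernels:
`R_{k,μ,m+n}(t,s) = ∫_{[s,t]} R_{k,μ,m}(t,u) R_{k,μ,n}(u,s) μ(du)`. -/
theorem stmt12 (I : Set ℝ) (hI : I.OrdConnected) (hne : ∃ a ∈ I, ∃ b ∈ I, a < b)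
    (μ : Measure ℝ) [SigmaFinite μ]
    (k : ℝ → ℝ → ℝ≥0∞) (hk : Measurable fun q : ℝ × ℝ => k q.1 q.2)
    (m n : ℕ) (hm : 1 ≤ m) (hn : 1 ≤ n)
    (s t : ℝ) (hs : s ∈ I) (ht : t ∈ I) (hst : s ≤ t) :
    iterK μ k (m + n) t s = ∫⁻ u in Icc s t, iterK μ k m t u * iterK μ k n u s ∂μ :=
  stmt12_general μ k hk m n hm hn s t
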